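/- arXiv:2412.18475 — 3 statements merged into one kernel-verified Lean document; each statement's English description precedes it below -/
import Mathlib

section
/- Let ρ : ℤ → ℝ and θ ∈ [0,1], and define the minmod slope σ_i := 2θ · minmod(ρ_i − ρ_{i−1}, (ρ_{i+1} − ρ_{i−1})/2, ρ_{i+1} − ρ_i). If ρ_i ≥ 0 for all i, then the face values ρ^-_{i+1/2} := ρ_i + σ_i/2 and ρ^+_{i−1/2} := ρ_i − σ_i/2 are both nonnegative for every i. -/
noncomputable def minmod (a b c : ℝ) : ℝ :=
  if (0 < a ∧ 0 < b ∧ 0 < c) ∨ (a < 0 ∧ b < 0 ∧ c < 0) then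
    Real.sign a * min |a| (min |b| |c|) else 0

theorem stmt1 (θ : ℝ) (hθ0 : 0 ≤ θ) (hθ1 : θ ≤ 1)
    (ρ : ℤ → ℝ) (hρ : ∀ i, 0 ≤ ρ i)
    (σ : ℤ → ℝ)
    (hσ : ∀ i, σ i = 2 * θ *
      minmod (ρ i - ρ (i - 1)) ((ρ (i + 1) - ρ (i - 1)) / 2) (ρ (i + 1) - ρ i)) :
    ∀ i, 0 ≤ ρ i + σ i / 2 ∧ 0 ≤ ρ i - σ i / 2 := by
  intro i
  have h := hσ i
  have h0 := hρ i
  have h1 := hρ (i - 1)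
  have h2 := hρ (i + 1)
  rw [minmod] at h
  split_ifs at h with hc
  · rcases hc with ⟨ha, hb, hcc⟩ | ⟨ha, hb, hcc⟩
    · rw [Real.sign_of_pos ha] at h
      have habs1 : |ρ i - ρ (i - 1)| = ρ i - ρ (i - 1) := abs_of_pos ha
      have habs3 : |ρ (i + 1) - ρ i| = ρ (i + 1) - ρ i := abs_of_pos hcc
      have hm1 : min |ρ i - ρ (i - 1)| (min |(ρ (i + 1) - ρ (i - 1)) / 2| |ρ (i + 1) - ρ i|)
          ≤ ρ i - ρ (i - 1) := by
        have := min_le_left |ρ i - ρ (i - 1)| (min |(ρ (i + 1) - ρ (i - 1)) / 2| |ρ (i + 1) - ρ i|)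
        linarith [habs1]
      have hm0 : 0 ≤ min |ρ i - ρ (i - 1)| (min |(ρ (i + 1) - ρ (i - 1)) / 2| |ρ (i + 1) - ρ i|) :=
        le_min (abs_nonneg _) (le_min (abs_nonneg _) (abs_nonneg _))
      constructor
      · nlinarith
      · nlinarith [mul_le_mul hθ1 hm1 hm0 zero_le_one]
    · rw [Real.sign_of_neg ha] at h
      have habs3 : |ρ (i + 1) - ρ i| = -(ρ (i + 1) - ρ i) := abs_of_neg hcc
      have hm3 : min |ρ i - ρ (i - 1)| (min |(ρ (i + 1) - ρ (i - 1)) / 2| |ρ (i + 1) - ρ i|)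
          ≤ -(ρ (i + 1) - ρ i) := by
        have := le_trans (min_le_right |ρ i - ρ (i - 1)| (min |(ρ (i + 1) - ρ (i - 1)) / 2| |ρ (i + 1) - ρ i|)) (min_le_right |(ρ (i + 1) - ρ (i - 1)) / 2| |ρ (i + 1) - ρ i|)
        linarith [habs3]
      have hm0 : 0 ≤ min |ρ i - ρ (i - 1)| (min |(ρ (i + 1) - ρ (i - 1)) / 2| |ρ (i + 1) - ρ i|) :=
        le_min (abs_nonneg _) (le_min (abs_nonneg _) (abs_nonneg _))
      constructor
      · nlinarith [mul_le_mul hθ1 hm3 hm0 zero_le_one]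
      · nlinarith
  · constructor <;> simp [h] <;> linarith
end

section
/- Let ρ : ℤ → ℝ with ρ_i ≥ 0 for all i, θ ∈ [0,1], and σ_i the minmod slope as above. Then the face values satisfy ρ^-_{i+1/2} = ρ_i + σ_i/2 ≤ (1+θ) ρ_i and ρ^+_{i−1/2} = ρ_i − σ_i/2 ≤ (1+θ) ρ_i for all i. -/
lemma minmod_abs_le (a b c r : ℝ) (hr : 0 ≤ r) (ha : a ≤ r) (hc : -c ≤ r) :
    |minmod a b c| ≤ r := by
  unfold minmod
  split_ifs with h
  · rcases h with ⟨h1, h2, h3⟩ | ⟨h1, h2, h3⟩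
    · rw [Real.sign_of_pos h1, one_mul,
        abs_of_nonneg (le_min (abs_nonneg _) (le_min (abs_nonneg _) (abs_nonneg _)))]
      calc min |a| (min |b| |c|) ≤ |a| := min_le_left _ _
        _ = a := abs_of_pos h1
        _ ≤ r := ha
    · rw [Real.sign_of_neg h1, abs_mul, abs_neg, abs_one, one_mul,
        abs_of_nonneg (le_min (abs_nonneg _) (le_min (abs_nonneg _) (abs_nonneg _)))]
      calc min |a| (min |b| |c|) ≤ |c| := le_trans (min_le_right _ _) (min_le_right _ _)
        _ = -c := abs_of_neg h3
        _ ≤ r := hc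
  · simpa using hr

theorem stmt2 (θ : ℝ) (hθ0 : 0 ≤ θ) (hθ1 : θ ≤ 1)
    (ρ : ℤ → ℝ) (hρ : ∀ i, 0 ≤ ρ i)
    (σ : ℤ → ℝ)
    (hσ : ∀ i, σ i = 2 * θ *
      minmod (ρ i - ρ (i - 1)) ((ρ (i + 1) - ρ (i - 1)) / 2) (ρ (i + 1) - ρ i)) :
    ∀ i, ρ i + σ i / 2 ≤ (1 + θ) * ρ i ∧ ρ i - σ i / 2 ≤ (1 + θ) * ρ i := by
  intro i
  have key : |minmod (ρ i - ρ (i - 1)) ((ρ (i + 1) - ρ (i - 1)) / 2) (ρ (i + 1) - ρ i)| ≤ ρ i := by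
    apply minmod_abs_le _ _ _ _ (hρ i)
    · linarith [hρ (i - 1)]
    · linarith [hρ (i + 1)]
  have h2 : |σ i| ≤ 2 * θ * ρ i := by
    rw [hσ i, abs_mul, abs_of_nonneg (by linarith : (0:ℝ) ≤ 2 * θ)]
    exact mul_le_mul_of_nonneg_left key (by linarith)
  have h3 := abs_le.mp h2
  constructor <;> nlinarith [h3.1, h3.2]
end

section
/- Let ρ : ℤ → ℝ and θ ∈ [0,1], with minmod slope σ_i as above. Then for every i with ρ_i ≠ ρ_{i−1}, the difference quotient of a face value satisfies 0 ≤ (ρ^-_{i+1/2} − ρ^-_{i−1/2})/(ρ_i − ρ_{i−1}) ≤ 1 + θ, where ρ^-_{i+1/2} = ρ_i + σ_i/2. -/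
lemma mm_facts (a b c : ℝ) : 0 ≤ minmod a b c * a ∧ 0 ≤ minmod a b c * c ∧
    |minmod a b c| ≤ |a| ∧ |minmod a b c| ≤ |c| := by
  unfold minmod
  split_ifs with h
  · have hmin0 : 0 ≤ min |a| (min |b| |c|) := le_min (abs_nonneg a) (le_min (abs_nonneg b) (abs_nonneg c))
    have hma : min |a| (min |b| |c|) ≤ |a| := min_le_left _ _
    have hmc : min |a| (min |b| |c|) ≤ |c| := le_trans (min_le_right _ _) (min_le_right _ _)
    rcases h with ⟨ha, hb, hc⟩ | ⟨ha, hb, hc⟩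
    · rw [Real.sign_of_pos ha, one_mul]
      exact ⟨mul_nonneg hmin0 ha.le, mul_nonneg hmin0 hc.le,
        by rwa [abs_of_nonneg hmin0], by rwa [abs_of_nonneg hmin0]⟩
    · rw [Real.sign_of_neg ha, neg_one_mul]
      refine ⟨?_, ?_, ?_, ?_⟩
      · nlinarith
      · nlinarith
      · rwa [abs_neg, abs_of_nonneg hmin0]
      · rwa [abs_neg, abs_of_nonneg hmin0]
  · simp

lemma mm_div (m d : ℝ) (hd : d ≠ 0) (h1 : 0 ≤ m * d) (h2 : |m| ≤ |d|) :
    0 ≤ m / d ∧ m / d ≤ 1 := by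
  constructor
  · rw [div_nonneg_iff]
    rcases hd.lt_or_gt with h | h
    · right; constructor
      · nlinarith
      · exact h.le
    · left; constructor
      · nlinarith
      · exact h.le
  · calc m / d ≤ |m / d| := le_abs_self _
      _ = |m| / |d| := abs_div m d
      _ ≤ 1 := by rw [div_le_one (abs_pos.mpr hd)]; exact h2

theorem stmt4 (θ : ℝ) (hθ0 : 0 ≤ θ) (hθ1 : θ ≤ 1)
    (ρ : ℤ → ℝ)
    (σ : ℤ → ℝ)
    (hσ : ∀ i, σ i = 2 * θ *
      minmod (ρ i - ρ (i - 1)) ((ρ (i + 1) - ρ (i - 1)) / 2) (ρ (i + 1) - ρ i)) :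
    ∀ i, ρ i ≠ ρ (i - 1) →
      0 ≤ ((ρ i + σ i / 2) - (ρ (i - 1) + σ (i - 1) / 2)) / (ρ i - ρ (i - 1)) ∧
      ((ρ i + σ i / 2) - (ρ (i - 1) + σ (i - 1) / 2)) / (ρ i - ρ (i - 1)) ≤ 1 + θ := by
  intro i hne
  set d : ℝ := ρ i - ρ (i - 1) with hd
  have hd0 : d ≠ 0 := sub_ne_zero.mpr hne
  set m1 : ℝ := minmod (ρ i - ρ (i - 1)) ((ρ (i + 1) - ρ (i - 1)) / 2) (ρ (i + 1) - ρ i)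
    with hm1
  set m0 : ℝ := minmod (ρ (i - 1) - ρ (i - 1 - 1)) ((ρ (i - 1 + 1) - ρ (i - 1 - 1)) / 2)
    (ρ (i - 1 + 1) - ρ (i - 1)) with hm0
  have e1 : ρ (i - 1 + 1) = ρ i := by norm_num
  have h1 := mm_facts (ρ i - ρ (i - 1)) ((ρ (i + 1) - ρ (i - 1)) / 2) (ρ (i + 1) - ρ i)
  have h0 := mm_facts (ρ (i - 1) - ρ (i - 1 - 1)) ((ρ (i - 1 + 1) - ρ (i - 1 - 1)) / 2)
    (ρ (i - 1 + 1) - ρ (i - 1))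
  rw [← hm1] at h1
  rw [← hm0, e1] at h0
  have hx : 0 ≤ m1 / d ∧ m1 / d ≤ 1 := mm_div _ _ hd0 h1.1 h1.2.2.1
  have hy : 0 ≤ m0 / d ∧ m0 / d ≤ 1 := mm_div _ _ hd0 h0.2.1 h0.2.2.2
  have hσi : σ i = 2 * θ * m1 := hσ i
  have hσi1 : σ (i - 1) = 2 * θ * m0 := hσ (i - 1)
  have key : ((ρ i + σ i / 2) - (ρ (i - 1) + σ (i - 1) / 2)) / (ρ i - ρ (i - 1))
      = 1 + θ * (m1 / d) - θ * (m0 / d) := by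
    rw [hσi, hσi1, ← hd]
    field_simp
    ring
  rw [key]
  obtain ⟨hx0, hx1⟩ := hx
  obtain ⟨hy0, hy1⟩ := hy
  constructor
  · nlinarith
  · nlinarith
end
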